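/- Let n ≥ 2, d, p, C, l, u be natural numbers with l + u = n and u ≥ 1. Let X be a d×n real matrix each of whose columns has Euclidean norm at most 1. Let Y_n and Y_p be n×C real matrices such that every row of Y_n and every row of Y_p is a standard basis vector of ℝ^C, and the first l rows of Y_p coincide with the corresponding rows of Y_n. Let m be the number of indices i with l < i ≤ n such that the i-th row of Y_p differs from the i-th row of Y_n, and set P_e = m/u. Let H_n = I - (1/n)·J be the centering matrix and f_X(V,Y) = (1/(n-1)²)·tr(Vᵀ X H_n Y Yᵀ H_n Xᵀ V). Suppose V* and V† are d×p real matrices with V*ᵀV* = I and V†ᵀV† = I such that V* maximizes f_X(V, Y_n) and V† maximizes f_X(V, Y_p) over all d×p matrices V with VᵀV = I. Then sqrt(f_X(V*, Y_n)) − sqrt(f_X(V†, Y_n)) ≤ (2(2+√2)·u/(n-1))·P_e. -/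

import Mathlib

open Matrix

/-- The `n × n` centering matrix `H_n = I - (1/n)·J`, where `J` is the all-ones matrix. -/
noncomputable def centering (n : ℕ) : Matrix (Fin n) (Fin n) ℝ :=
  1 - ((n : ℝ))⁻¹ • Matrix.of (fun _ _ => (1 : ℝ))

/-- The HSIC objective `f_X(V,Y) = (1/(n-1)²)·tr(Vᵀ X H_n Y Yᵀ H_n Xᵀ V)`. -/
noncomputable def fObj {n d p C : ℕ} (X : Matrix (Fin d) (Fin n) ℝ)
    (V : Matrix (Fin d) (Fin p) ℝ) (Y : Matrix (Fin n) (Fin C) ℝ) : ℝ :=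
  (1 / ((n : ℝ) - 1) ^ 2) *
    Matrix.trace (Vᵀ * X * centering n * Y * Yᵀ * centering n * Xᵀ * V)

/-!
`√f_X(V, Y)` is the Frobenius norm of `Yᵀ H_n Xᵀ V` divided by `n - 1`, so replacing `Y_n`
by `Y_p` moves it by at most `‖(Y_n - Y_p)ᵀ H_n Xᵀ V‖ / (n - 1)`. That matrix is a sum of one
outer product per misclassified point: a difference of two one-hot rows (norm `≤ √2`) times a
centred data point projected by `Vᵀ` (norm `≤ 2`, since the points lie in the unit ball and
`Vᵀ` is a contraction). So `√f_X(·, Y_n)` and `√f_X(·, Y_p)` are uniformly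
`2√2 m / (n - 1)`-close on `{V | VᵀV = 1}`, and a maximizer of the second loses at most twice
that on the first; finally `4√2 ≤ 2(2 + √2)`.
-/

open WithLp

theorem centering_transpose (n : ℕ) : (centering n)ᵀ = centering n := by
  ext i j
  simp [centering, one_apply, eq_comm]

theorem norm_sub_smul_sum_le_two {E : Type*} [SeminormedAddCommGroup E] [NormedSpace ℝ E]
    {n : ℕ} {x : Fin n → E} (hx : ∀ j, ‖x j‖ ≤ 1) (i : Fin n) :
    ‖x i - (n : ℝ)⁻¹ • ∑ j, x j‖ ≤ 2 := by
  have hmean : ‖(n : ℝ)⁻¹ • ∑ j, x j‖ ≤ 1 :=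
    calc ‖(n : ℝ)⁻¹ • ∑ j, x j‖ ≤ (n : ℝ)⁻¹ * ∑ _j : Fin n, (1 : ℝ) := by
          rw [norm_smul, Real.norm_eq_abs, abs_inv, Nat.abs_cast]
          gcongr
          exact (norm_sum_le _ _).trans (Finset.sum_le_sum fun j _ => hx j)
      _ ≤ 1 := by simp [inv_mul_le_one]
  linarith [norm_sub_le (x i) ((n : ℝ)⁻¹ • ∑ j, x j), hx i]

theorem toLp_centering_mul_apply {n : ℕ} {ι : Type*} (A : Matrix (Fin n) ι ℝ) (i : Fin n) :
    toLp 2 ((centering n * A) i) = toLp 2 (A i) - (n : ℝ)⁻¹ • ∑ j, toLp 2 (A j) := by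
  ext k
  have hk : (∑ j, A j : ι → ℝ) k = ∑ j, A j k := Finset.sum_apply k _ _
  simp [centering, sub_mul, mul_apply, one_apply, Finset.mul_sum, hk]

theorem norm_single_sub_single_le {ι : Type*} [Fintype ι] [DecidableEq ι] (a b : ι) :
    ‖toLp 2 (Pi.single a 1 - Pi.single b 1 : ι → ℝ)‖ ≤ √2 := by
  rw [toLp_sub, PiLp.toLp_single, PiLp.toLp_single]
  have hinner :
      0 ≤ inner ℝ (PiLp.single 2 a (1 : ℝ) : EuclideanSpace ℝ ι) (PiLp.single 2 b 1) := by
    rw [EuclideanSpace.inner_single_left, PiLp.single_apply]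
    split_ifs <;> norm_num
  refine Real.le_sqrt_of_sq_le ?_
  rw [norm_sub_sq_real, PiLp.norm_single, PiLp.norm_single, norm_one]
  linarith

section L2Operator
open scoped Matrix.Norms.L2Operator

theorem norm_vecMul_le_of_transpose_mul_self_eq_one {m p : Type*} [Fintype m] [Fintype p]
    [DecidableEq p] {V : Matrix m p ℝ} (hV : Vᵀ * V = 1) (w : m → ℝ) :
    ‖toLp 2 (w ᵥ* V)‖ ≤ ‖toLp 2 w‖ := by
  classical
  have hV1 : ‖V‖ ≤ 1 := by
    have hsq := l2_opNorm_conjTranspose_mul_self V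
    rw [conjTranspose_eq_transpose_of_trivial, hV, ← l2_opNorm_toEuclideanCLM, map_one] at hsq
    have hone : ‖(1 : EuclideanSpace ℝ p →L[ℝ] EuclideanSpace ℝ p)‖ ≤ 1 :=
      ContinuousLinearMap.norm_id_le
    nlinarith [norm_nonneg V]
  calc ‖toLp 2 (w ᵥ* V)‖ = ‖toLp 2 (Vᵀ *ᵥ w)‖ := by rw [mulVec_transpose]
    _ ≤ ‖Vᵀ‖ * ‖toLp 2 w‖ := l2_opNorm_mulVec _ _
    _ ≤ ‖toLp 2 w‖ := by
      rw [← conjTranspose_eq_transpose_of_trivial, l2_opNorm_conjTranspose]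
      exact mul_le_of_le_one_left (norm_nonneg _) hV1

end L2Operator

section Frobenius
open scoped Matrix.Norms.Frobenius

theorem frobenius_norm_sq_eq_trace_transpose_mul_self {m n : Type*} [Fintype m] [Fintype n]
    (A : Matrix m n ℝ) : ‖A‖ ^ 2 = trace (Aᵀ * A) := by
  -- the Frobenius norm is definitionally the L² norm of the L² norms of the rows
  change ‖toLp 2 fun i => toLp 2 (A i)‖ ^ 2 = _
  rw [PiLp.norm_sq_eq_of_L2, trace]
  simp only [EuclideanSpace.real_norm_sq_eq]
  rw [Finset.sum_comm]
  simp [mul_apply, sq]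

theorem frobenius_norm_transpose_mul_le_sum {ι m n 𝕜 : Type*} [Fintype ι] [Fintype m]
    [Fintype n] [RCLike 𝕜] (D : Matrix ι m 𝕜) (B : Matrix ι n 𝕜) :
    ‖Dᵀ * B‖ ≤ ∑ i, ‖toLp 2 (D i)‖ * ‖toLp 2 (B i)‖ := by
  have hsum : Dᵀ * B = ∑ i, vecMulVec (D i) (B i) := by
    ext a b
    simp [mul_apply, Matrix.sum_apply, vecMulVec_apply]
  rw [hsum]
  refine (norm_sum_le _ _).trans (Finset.sum_le_sum fun i _ => ?_)
  rw [vecMulVec_eq Unit, ← frobenius_norm_replicateCol (ι := Unit),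
    ← frobenius_norm_replicateRow (ι := Unit)]
  exact frobenius_norm_mul _ _

theorem sqrt_fObj_eq_frobenius_norm_div {n d p C : ℕ} (X : Matrix (Fin d) (Fin n) ℝ)
    (V : Matrix (Fin d) (Fin p) ℝ) (Y : Matrix (Fin n) (Fin C) ℝ) :
    √(fObj X V Y) = ‖Yᵀ * centering n * Xᵀ * V‖ / |(n : ℝ) - 1| := by
  have hgram : Vᵀ * X * centering n * Y * Yᵀ * centering n * Xᵀ * V
      = (Yᵀ * centering n * Xᵀ * V)ᵀ * (Yᵀ * centering n * Xᵀ * V) := by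
    simp [transpose_mul, centering_transpose, Matrix.mul_assoc]
  rw [fObj, hgram, ← frobenius_norm_sq_eq_trace_transpose_mul_self, ← sq_abs ((n : ℝ) - 1),
    one_div_mul_eq_div, ← div_pow, Real.sqrt_sq (by positivity)]

theorem abs_sqrt_fObj_sub_sqrt_fObj_le {n d p C : ℕ} (X : Matrix (Fin d) (Fin n) ℝ)
    (V : Matrix (Fin d) (Fin p) ℝ) (Y Y' : Matrix (Fin n) (Fin C) ℝ) :
    |√(fObj X V Y) - √(fObj X V Y')|
      ≤ ‖(Y - Y')ᵀ * centering n * Xᵀ * V‖ / |(n : ℝ) - 1| := by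
  rw [sqrt_fObj_eq_frobenius_norm_div, sqrt_fObj_eq_frobenius_norm_div, ← sub_div, abs_div,
    abs_abs, transpose_sub, Matrix.sub_mul, Matrix.sub_mul, Matrix.sub_mul]
  gcongr
  exact abs_norm_sub_norm_le _ _

theorem norm_oneHot_sub_transpose_mul_centering_le {n : ℕ} {d p C : Type*} [Fintype d]
    [Fintype p] [DecidableEq p] [Fintype C] [DecidableEq C]
    {X : Matrix d (Fin n) ℝ} (hX : ∀ j, ‖toLp 2 (Xᵀ j)‖ ≤ 1)
    {V : Matrix d p ℝ} (hV : Vᵀ * V = 1) {Y Y' : Matrix (Fin n) C ℝ}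
    (hY : ∀ i, ∃ c, Y i = Pi.single c 1) (hY' : ∀ i, ∃ c, Y' i = Pi.single c 1)
    {S : Finset (Fin n)} (hS : ∀ i ∉ S, Y' i = Y i) :
    ‖(Y - Y')ᵀ * centering n * Xᵀ * V‖ ≤ 2 * √2 * S.card := by
  have hrow : ∀ i, ‖toLp 2 ((Y - Y') i)‖ * ‖toLp 2 ((centering n * Xᵀ * V) i)‖
      ≤ if i ∈ S then 2 * √2 else 0 := by
    intro i
    have hsub : (Y - Y') i = Y i - Y' i := rfl
    split_ifs with hi
    · obtain ⟨a, ha⟩ := hY i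
      obtain ⟨b, hb⟩ := hY' i
      have hdiff : ‖toLp 2 ((Y - Y') i)‖ ≤ √2 := by
        rw [hsub, ha, hb]
        exact norm_single_sub_single_le a b
      have hproj : ‖toLp 2 ((centering n * Xᵀ * V) i)‖ ≤ 2 :=
        (norm_vecMul_le_of_transpose_mul_self_eq_one hV _).trans
          (by rw [toLp_centering_mul_apply]; exact norm_sub_smul_sum_le_two hX i)
      calc _ ≤ √2 * 2 := mul_le_mul hdiff hproj (norm_nonneg _) (Real.sqrt_nonneg 2)
        _ = 2 * √2 := mul_comm _ _
    · simp [hsub, hS i hi]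
  calc ‖(Y - Y')ᵀ * centering n * Xᵀ * V‖
      ≤ ∑ i, ‖toLp 2 ((Y - Y') i)‖ * ‖toLp 2 ((centering n * Xᵀ * V) i)‖ := by
        rw [Matrix.mul_assoc, Matrix.mul_assoc, ← Matrix.mul_assoc (centering n)]
        exact frobenius_norm_transpose_mul_le_sum _ _
    _ ≤ ∑ i, if i ∈ S then 2 * √2 else 0 := Finset.sum_le_sum fun i _ => hrow i
    _ = 2 * √2 * S.card := by simp [mul_comm]

end Frobenius

theorem sub_le_two_mul_of_abs_sub_le_of_isMaxOn {α : Type*} {s : Set α} {f g : α → ℝ} {ε : ℝ}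
    {a b : α} (hfg : ∀ x ∈ s, |f x - g x| ≤ ε) (hb : IsMaxOn g s b) (ha : a ∈ s)
    (hbs : b ∈ s) : f a - f b ≤ 2 * ε := by
  have hfa := (abs_le.mp (hfg a ha)).2
  have hfb := (abs_le.mp (hfg b hbs)).1
  have hg : g a ≤ g b := hb ha
  linarith

open Classical in
theorem stmt2_general (n d p C l u : ℕ) (hn : 2 ≤ n) (hu : 1 ≤ u)
    (X : Matrix (Fin d) (Fin n) ℝ)
    (hX : ∀ j : Fin n, Real.sqrt (∑ i : Fin d, X i j ^ 2) ≤ 1)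
    (Yn Yp : Matrix (Fin n) (Fin C) ℝ)
    (hYn : ∀ i : Fin n, ∃ c : Fin C, Yn i = Pi.single c 1)
    (hYp : ∀ i : Fin n, ∃ c : Fin C, Yp i = Pi.single c 1)
    (hagree : ∀ i : Fin n, (i : ℕ) < l → Yp i = Yn i)
    (m : ℕ)
    (hm : m = (Finset.univ.filter fun i : Fin n => l ≤ (i : ℕ) ∧ Yp i ≠ Yn i).card)
    (Pe : ℝ) (hPe : Pe = (m : ℝ) / u)
    (Vstar Vdag : Matrix (Fin d) (Fin p) ℝ)
    (hVstar : Vstarᵀ * Vstar = 1) (hVdag : Vdagᵀ * Vdag = 1)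
    (hVdagMax : ∀ V : Matrix (Fin d) (Fin p) ℝ, Vᵀ * V = 1 →
      fObj X V Yp ≤ fObj X Vdag Yp) :
    Real.sqrt (fObj X Vstar Yn) - Real.sqrt (fObj X Vdag Yn) ≤
      2 * (2 + Real.sqrt 2) * (u : ℝ) / ((n : ℝ) - 1) * Pe := by
  have hn1 : (0 : ℝ) < n - 1 := by
    have : (2 : ℝ) ≤ n := by exact_mod_cast hn
    linarith
  have hcol : ∀ j, ‖toLp 2 (Xᵀ j)‖ ≤ 1 := fun j => by
    simpa [EuclideanSpace.norm_eq] using hX j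
  have hclean : ∀ i ∉ Finset.univ.filter fun i : Fin n => l ≤ (i : ℕ) ∧ Yp i ≠ Yn i,
      Yp i = Yn i := fun i hi => by
    by_contra hne
    exact hi (Finset.mem_filter.mpr ⟨Finset.mem_univ _, not_lt.mp (mt (hagree i) hne), hne⟩)
  have hclose : ∀ V ∈ {V : Matrix (Fin d) (Fin p) ℝ | Vᵀ * V = 1},
      |√(fObj X V Yn) - √(fObj X V Yp)| ≤ 2 * √2 * m / (n - 1) := fun V hV => by
    refine (abs_sqrt_fObj_sub_sqrt_fObj_le X V Yn Yp).trans ?_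
    rw [abs_of_pos hn1, hm]
    gcongr
    exact norm_oneHot_sub_transpose_mul_centering_le hcol hV hYn hYp hclean
  have hmax : IsMaxOn (fun V => √(fObj X V Yp)) {V | Vᵀ * V = 1} Vdag :=
    fun V hV => Real.sqrt_le_sqrt (hVdagMax V hV)
  have hsqrt2 : √2 ≤ 2 := Real.sqrt_le_iff.mpr ⟨by norm_num, by norm_num⟩
  have hu0 : (u : ℝ) ≠ 0 := by positivity
  calc √(fObj X Vstar Yn) - √(fObj X Vdag Yn) ≤ 2 * (2 * √2 * m / (n - 1)) :=
        sub_le_two_mul_of_abs_sub_le_of_isMaxOn (f := fun V => √(fObj X V Yn)) hclose hmax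
          hVstar hVdag
    _ ≤ 2 * (2 + √2) * m / (n - 1) := by
        rw [← mul_div_assoc, ← mul_assoc]
        gcongr
        linarith
    _ = 2 * (2 + √2) * u / (n - 1) * Pe := by
        rw [hPe]
        field_simp

open Classical in
/-- Theorem 3 of the paper (performance bound for SSRL-PL):
`sqrt(f_X(V*, Y_n)) − sqrt(f_X(V†, Y_n)) ≤ (2(2+√2)·u/(n-1))·P_e^WTA`. -/
theorem stmt2 (n d p C l u : ℕ) (hn : 2 ≤ n) (hu : 1 ≤ u) (hlu : l + u = n)
    (X : Matrix (Fin d) (Fin n) ℝ)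
    (hX : ∀ j : Fin n, Real.sqrt (∑ i : Fin d, X i j ^ 2) ≤ 1)
    (Yn Yp : Matrix (Fin n) (Fin C) ℝ)
    (hYn : ∀ i : Fin n, ∃ c : Fin C, Yn i = Pi.single c 1)
    (hYp : ∀ i : Fin n, ∃ c : Fin C, Yp i = Pi.single c 1)
    (hagree : ∀ i : Fin n, (i : ℕ) < l → Yp i = Yn i)
    (m : ℕ)
    (hm : m = (Finset.univ.filter fun i : Fin n => l ≤ (i : ℕ) ∧ Yp i ≠ Yn i).card)
    (Pe : ℝ) (hPe : Pe = (m : ℝ) / u)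
    (Vstar Vdag : Matrix (Fin d) (Fin p) ℝ)
    (hVstar : Vstarᵀ * Vstar = 1) (hVdag : Vdagᵀ * Vdag = 1)
    (hVstarMax : ∀ V : Matrix (Fin d) (Fin p) ℝ, Vᵀ * V = 1 →
      fObj X V Yn ≤ fObj X Vstar Yn)
    (hVdagMax : ∀ V : Matrix (Fin d) (Fin p) ℝ, Vᵀ * V = 1 →
      fObj X V Yp ≤ fObj X Vdag Yp) :
    Real.sqrt (fObj X Vstar Yn) - Real.sqrt (fObj X Vdag Yn) ≤
      2 * (2 + Real.sqrt 2) * (u : ℝ) / ((n : ℝ) - 1) * Pe :=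
  stmt2_general n d p C l u hn hu X hX Yn Yp hYn hYp hagree m hm Pe hPe Vstar Vdag hVstar hVdag
    hVdagMax
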